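/- Let (f₀, f₁, f₂) ∈ ℝ³ with f₀ ≠ f₁ and f₁ ≠ f₂, and let κ ∈ ℝ with κ ≠ 0. Then the WENO3-Z nonlinear weights with ε = 0 of the scaled stencil (κf₀, κf₁, κf₂) equal the WENO3-Z nonlinear weights with ε = 0 of (f₀, f₁, f₂); that is, the WENO3-Z weighting function with ε = 0 is scale-invariant on stencils with nonvanishing smoothness indicators. -/
import Mathlib


/-- WENO3-Z nonlinear weights of the three-point stencil `(f₀, f₁, f₂)`
with regularization parameter `ε`. -/
noncomputable def zWeights (ε f0 f1 f2 : ℝ) : ℝ × ℝ :=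
  let β0 := (f0 - f1) ^ 2
  let β1 := (f1 - f2) ^ 2
  let τ := |β0 - β1|
  let α0 := (1 / 3) * (1 + (τ / (β0 + ε)) ^ 2)
  let α1 := (2 / 3) * (1 + (τ / (β1 + ε)) ^ 2)
  (α0 / (α0 + α1), α1 / (α0 + α1))

theorem zWeights_scale_invariant (f0 f1 f2 κ : ℝ)
    (h01 : f0 ≠ f1) (h12 : f1 ≠ f2) (hκ : κ ≠ 0) :
    zWeights 0 (κ * f0) (κ * f1) (κ * f2) = zWeights 0 f0 f1 f2 := by
  unfold zWeights
  have hk2 : κ ^ 2 ≠ 0 := pow_ne_zero _ hκ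
  have e0 : (κ * f0 - κ * f1) ^ 2 = κ ^ 2 * (f0 - f1) ^ 2 := by ring
  have e1 : (κ * f1 - κ * f2) ^ 2 = κ ^ 2 * (f1 - f2) ^ 2 := by ring
  have eτ : |κ ^ 2 * (f0 - f1) ^ 2 - κ ^ 2 * (f1 - f2) ^ 2|
      = κ ^ 2 * |(f0 - f1) ^ 2 - (f1 - f2) ^ 2| := by
    rw [← mul_sub, abs_mul, abs_of_nonneg (sq_nonneg κ)]
  simp only [e0, e1, add_zero, eτ, mul_div_mul_left _ _ hk2]
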